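/- arXiv:1403.7562 — 2 statements merged into one kernel-verified Lean document; each statement's English description precedes it below -/
import Mathlib

section
/- Suppose the real-valued stochastic process ξ = (ξ(t))_{t∈T} satisfies the strengthened Cramér condition, is centered (E ξ(t) = 0 for all t ∈ T), and is nondegenerate in the sense that sup_{t∈T} Var ξ(t) > 0. Then there exist constants 0 < C₁ ≤ C₂ < ∞ such that for every λ with |λ| ≤ 1 one has C₁ λ² ≤ φ(λ) ≤ C₂ λ². -/
/-!
Taking `μ = 3` in the strengthened Cramér condition gives tail bounds `P(|ξ t| > x) ≤ e^{-3x}`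
uniform in `t`; summing them over the shells `n < |ξ t| ≤ n + 1` bounds `E e^{2|ξ t|}` by a
constant `M` independent of `t`. For `|λ| ≤ 1` the Taylor bound `e^u ≤ 1 + u + u² e^{|u|}`
and `E ξ t = 0` give `E e^{λ ξ t} ≤ 1 + 2 M λ²`, so `log E e^{λ ξ t} ≤ E e^{λ ξ t} - 1 ≤ 2 M λ²`.
Conversely `e^u + e^{-u} ≥ 2 + u²`, so at a point `t₀` of positive variance `v` one of
`E e^{±λ ξ t₀}` is at least `1 + v λ² / 2`, whose logarithm is at least `2v / (v + 4) · λ²`.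
-/

open MeasureTheory ProbabilityTheory Real Set

/-- The strengthened Cramér condition: for every `μ > 0` there is `x₀ > 0` such that
for all `x > x₀`, `sup_{t ∈ T} P(|ξ t| > x) ≤ exp (-μ x)`. -/
def StrengthenedCramer {T Ω : Type*} [MeasurableSpace Ω]
    (P : Measure Ω) (ξ : T → Ω → ℝ) : Prop :=
  ∀ μ : ℝ, 0 < μ → ∃ x₀ : ℝ, 0 < x₀ ∧ ∀ x : ℝ, x₀ < x →
    (⨆ t : T, P {ω | x < |ξ t ω|}) ≤ ENNReal.ofReal (Real.exp (-μ * x))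

/-- `φ(λ) = sup_{t ∈ T} max( log E exp(λ ξ(t)), log E exp(−λ ξ(t)) )`. -/
noncomputable def phiFun {T Ω : Type*} [MeasurableSpace Ω]
    (P : Measure Ω) (ξ : T → Ω → ℝ) (l : ℝ) : ℝ :=
  ⨆ t : T, max (Real.log (∫ ω, Real.exp (l * ξ t ω) ∂P))
               (Real.log (∫ ω, Real.exp (-l * ξ t ω) ∂P))

open scoped ENNReal

lemma exp_sub_one_sub_le_sq_mul_exp_abs (u : ℝ) : exp u - 1 - u ≤ u ^ 2 * exp |u| := by
  have h := Complex.norm_exp_sub_sum_le_norm_mul_exp (u : ℂ) 2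
  simp only [Finset.sum_range_succ, Finset.sum_range_zero] at h
  norm_num at h
  rw [← Complex.ofReal_exp, ← Complex.ofReal_one, ← Complex.ofReal_add, ← Complex.ofReal_sub,
    Complex.norm_real, Real.norm_eq_abs] at h
  linarith [le_abs_self (exp u - (1 + u))]

lemma sq_le_two_mul_exp {y : ℝ} (hy : 0 ≤ y) : y ^ 2 ≤ 2 * exp y := by
  linarith [quadratic_le_exp_of_nonneg hy]

lemma exp_mul_le_one_add_add_two_mul_sq_mul_exp {l : ℝ} (hl : |l| ≤ 1) (x : ℝ) :
    exp (l * x) ≤ 1 + l * x + 2 * l ^ 2 * exp (2 * |x|) := by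
  have hx : x ^ 2 * exp |x| ≤ 2 * exp (2 * |x|) := by
    calc x ^ 2 * exp |x| = |x| ^ 2 * exp |x| := by rw [sq_abs]
      _ ≤ 2 * exp |x| * exp |x| := by gcongr; exact sq_le_two_mul_exp (abs_nonneg x)
      _ = 2 * exp (2 * |x|) := by rw [mul_assoc, ← exp_add, two_mul]; ring_nf
  have hlx : exp |l * x| ≤ exp |x| := by
    rw [abs_mul]; gcongr; exact mul_le_of_le_one_left (abs_nonneg x) hl
  calc exp (l * x) ≤ 1 + l * x + (l * x) ^ 2 * exp |l * x| := by
        linarith [exp_sub_one_sub_le_sq_mul_exp_abs (l * x)]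
    _ ≤ 1 + l * x + l ^ 2 * (x ^ 2 * exp |x|) := by rw [mul_pow, mul_assoc]; gcongr
    _ ≤ 1 + l * x + 2 * l ^ 2 * exp (2 * |x|) := by nlinarith [sq_nonneg l]

lemma two_add_sq_le_exp_add_exp_neg (u : ℝ) : 2 + u ^ 2 ≤ exp u + exp (-u) := by
  have hsinh : (u / 2) ^ 2 ≤ sinh (u / 2) ^ 2 := by
    rw [← sq_abs (sinh _), abs_sinh, ← sq_abs]
    gcongr
    exact self_le_sinh_iff.2 (abs_nonneg _)
  have hcosh : cosh u = 1 + 2 * sinh (u / 2) ^ 2 := by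
    rw [← mul_div_cancel₀ u two_ne_zero, cosh_two_mul, cosh_sq]; ring_nf
  rw [← mul_div_cancel₀ (exp u + exp (-u)) two_ne_zero, ← cosh_eq]
  nlinarith

lemma mul_sq_le_log_one_add_mul_sq {a l : ℝ} (ha : 0 ≤ a) (hl : l ^ 2 ≤ 1) :
    2 * a / (a + 2) * l ^ 2 ≤ log (1 + a * l ^ 2) := by
  have hal : a * l ^ 2 ≤ a := mul_le_of_le_one_right ha hl
  calc 2 * a / (a + 2) * l ^ 2 = 2 * (a * l ^ 2) / (a + 2) := by ring
    _ ≤ 2 * (a * l ^ 2) / (a * l ^ 2 + 2) := by gcongr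
    _ ≤ log (1 + a * l ^ 2) := le_log_one_add_of_nonneg (by positivity)

lemma log_le_max_log_of_le_max {x a b : ℝ} (hx : 0 < x) (h : x ≤ max a b) :
    log x ≤ max (log a) (log b) := by
  rcases le_max_iff.1 h with ha | hb
  · exact le_max_of_le_left (log_le_log hx ha)
  · exact le_max_of_le_right (log_le_log hx hb)

lemma ofReal_exp_two_mul_le_add_tsum_indicator (N : ℕ) (y : ℝ) :
    ENNReal.ofReal (exp (2 * y)) ≤ ENNReal.ofReal (exp (2 * N)) +
      ∑' k : ℕ, (Ioi ((N : ℝ) + k)).indicator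
        (fun _ => ENNReal.ofReal (exp (2 * ((N : ℝ) + k + 1)))) y := by
  rcases le_or_gt y N with hy | hy
  · exact le_add_right (ENNReal.ofReal_le_ofReal (exp_le_exp.2 (by linarith)))
  obtain ⟨k, hk⟩ : ∃ k : ℕ, ⌈y⌉₊ = N + k + 1 :=
    ⟨⌈y⌉₊ - N - 1, by have := Nat.lt_ceil.2 hy; omega⟩
  have hceil : (⌈y⌉₊ : ℝ) = N + k + 1 := by exact_mod_cast hk
  have hy_mem : y ∈ Ioi ((N : ℝ) + k) := by
    have := Nat.ceil_lt_add_one (hy.le.trans' (Nat.cast_nonneg N)); rw [mem_Ioi]; linarith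
  refine le_add_left (le_trans ?_ (ENNReal.le_tsum k))
  rw [indicator_of_mem hy_mem, ← hceil]
  exact ENNReal.ofReal_le_ofReal (exp_le_exp.2 (by linarith [Nat.le_ceil y]))

lemma tsum_ofReal_exp_mul_exp_le (N : ℕ) :
    ∑' k : ℕ, ENNReal.ofReal (exp (2 * ((N : ℝ) + k + 1))) *
      ENNReal.ofReal (exp (-3 * ((N : ℝ) + k))) ≤ ENNReal.ofReal (2 * exp 2) := by
  have hterm : ∀ k : ℕ, ENNReal.ofReal (exp (2 * ((N : ℝ) + k + 1))) *
      ENNReal.ofReal (exp (-3 * ((N : ℝ) + k))) ≤ ENNReal.ofReal (exp 2) * 2⁻¹ ^ k := by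
    intro k
    have half : (2⁻¹ : ℝ≥0∞) = ENNReal.ofReal 2⁻¹ := by
      rw [ENNReal.ofReal_inv_of_pos two_pos, ENNReal.ofReal_ofNat]
    rw [← ENNReal.ofReal_mul (exp_pos _).le, ← exp_add, half,
      ← ENNReal.ofReal_pow (by norm_num), ← ENNReal.ofReal_mul (exp_pos _).le]
    refine ENNReal.ofReal_le_ofReal ?_
    calc exp (2 * ((N : ℝ) + k + 1) + -3 * ((N : ℝ) + k)) ≤ exp 2 * exp (-1) ^ k := by
          rw [← exp_nat_mul, ← exp_add, exp_le_exp]; linarith [(N.cast_nonneg : (0 : ℝ) ≤ N)]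
      _ ≤ exp 2 * 2⁻¹ ^ k := by gcongr; linarith [exp_neg_one_lt_half]
  calc _ ≤ ∑' k : ℕ, ENNReal.ofReal (exp 2) * 2⁻¹ ^ k := ENNReal.tsum_le_tsum hterm
    _ = ENNReal.ofReal (2 * exp 2) := by
      rw [ENNReal.tsum_mul_left, ENNReal.tsum_geometric, ENNReal.one_sub_inv_two, inv_inv,
        ENNReal.ofReal_mul zero_le_two, ENNReal.ofReal_ofNat, mul_comm]

section

variable {Ω : Type*} [MeasurableSpace Ω] {P : Measure Ω}

lemma lintegral_exp_two_mul_abs_le_of_tail [IsProbabilityMeasure P] {X : Ω → ℝ}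
    (hX : Measurable X) {x₀ : ℝ} (hx₀ : 0 ≤ x₀)
    (htail : ∀ x, x₀ < x → P {ω | x < |X ω|} ≤ ENNReal.ofReal (exp (-3 * x))) :
    ∫⁻ ω, ENNReal.ofReal (exp (2 * |X ω|)) ∂P ≤
      ENNReal.ofReal (exp (2 * (x₀ + 1)) + 2 * exp 2) := by
  set N := ⌊x₀⌋₊ + 1
  have hN : x₀ < N ∧ (N : ℝ) ≤ x₀ + 1 := by
    constructor <;> push_cast [N] <;> linarith [Nat.lt_floor_add_one x₀, Nat.floor_le hx₀]
  calc ∫⁻ ω, ENNReal.ofReal (exp (2 * |X ω|)) ∂P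
      ≤ ∫⁻ ω, (ENNReal.ofReal (exp (2 * N)) + ∑' k : ℕ, (Ioi ((N : ℝ) + k)).indicator
          (fun _ => ENNReal.ofReal (exp (2 * ((N : ℝ) + k + 1)))) |X ω|) ∂P :=
        lintegral_mono fun ω => ofReal_exp_two_mul_le_add_tsum_indicator N |X ω|
    _ = ENNReal.ofReal (exp (2 * N)) +
          ∑' k : ℕ, ENNReal.ofReal (exp (2 * ((N : ℝ) + k + 1))) * P {ω | (N : ℝ) + k < |X ω|} := by
        rw [lintegral_add_left measurable_const, lintegral_const, measure_univ, mul_one,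
          lintegral_tsum fun k => ?_]
        · simp_rw [lintegral_indicator_const_comp hX.abs measurableSet_Ioi]
          rfl
        · exact (measurable_const.indicator measurableSet_Ioi |>.comp hX.abs).aemeasurable
    _ ≤ ENNReal.ofReal (exp (2 * N)) + ENNReal.ofReal (2 * exp 2) := by
        gcongr
        refine le_trans (ENNReal.tsum_le_tsum fun k => ?_) (tsum_ofReal_exp_mul_exp_le N)
        gcongr
        exact htail _ (by linarith [hN.1, (k.cast_nonneg : (0 : ℝ) ≤ k)])
    _ ≤ ENNReal.ofReal (exp (2 * (x₀ + 1)) + 2 * exp 2) := by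
        rw [← ENNReal.ofReal_add (exp_pos _).le (by positivity)]
        gcongr
        exact hN.2

lemma StrengthenedCramer.exists_forall_integral_exp_two_mul_abs_le {T : Type*}
    [IsProbabilityMeasure P] {ξ : T → Ω → ℝ} (hξ : StrengthenedCramer P ξ)
    (hmeas : ∀ t, Measurable (ξ t)) :
    ∃ M, ∀ t, Integrable (fun ω => exp (2 * |ξ t ω|)) P ∧ ∫ ω, exp (2 * |ξ t ω|) ∂P ≤ M := by
  obtain ⟨x₀, hx₀, htail⟩ := hξ 3 three_pos
  refine ⟨exp (2 * (x₀ + 1)) + 2 * exp 2, fun t => ?_⟩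
  have hf : AEStronglyMeasurable (fun ω => exp (2 * |ξ t ω|)) P :=
    (measurable_exp.comp ((hmeas t).abs.const_mul 2)).aestronglyMeasurable
  have hf0 : 0 ≤ᵐ[P] fun ω => exp (2 * |ξ t ω|) := ae_of_all _ fun ω => (exp_pos _).le
  have hlin := lintegral_exp_two_mul_abs_le_of_tail (hmeas t) hx₀.le
    fun x hx => (le_iSup (fun t => P {ω | x < |ξ t ω|}) t).trans (htail x hx)
  refine ⟨(lintegral_ofReal_ne_top_iff_integrable hf hf0).1
    (ne_top_of_le_ne_top ENNReal.ofReal_ne_top hlin), ?_⟩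
  rw [integral_eq_lintegral_of_nonneg_ae hf0 hf]
  exact ENNReal.toReal_le_of_le_ofReal (by positivity) hlin

variable {X : Ω → ℝ}

lemma integrable_exp_mul_of_integrable_exp_two_mul_abs (hX : Measurable X)
    (hint : Integrable (fun ω => exp (2 * |X ω|)) P) {l : ℝ} (hl : |l| ≤ 2) :
    Integrable (fun ω => exp (l * X ω)) P := by
  refine hint.mono' (measurable_exp.comp (hX.const_mul l)).aestronglyMeasurable
    (ae_of_all _ fun ω => ?_)
  rw [norm_of_nonneg (exp_pos _).le, exp_le_exp]
  calc l * X ω ≤ |l| * |X ω| := by rw [← abs_mul]; exact le_abs_self _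
    _ ≤ 2 * |X ω| := by gcongr

lemma integrable_of_integrable_exp_two_mul_abs (hX : Measurable X)
    (hint : Integrable (fun ω => exp (2 * |X ω|)) P) : Integrable X P :=
  hint.mono' hX.aestronglyMeasurable (ae_of_all _ fun ω => by
    rw [norm_eq_abs]; linarith [add_one_le_exp (2 * |X ω|), abs_nonneg (X ω)])

lemma integrable_sq_of_integrable_exp_two_mul_abs (hX : Measurable X)
    (hint : Integrable (fun ω => exp (2 * |X ω|)) P) : Integrable (fun ω => X ω ^ 2) P :=
  (hint.const_mul 2).mono' (hX.pow_const 2).aestronglyMeasurable (ae_of_all _ fun ω => by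
    rw [norm_of_nonneg (sq_nonneg _), ← sq_abs]
    calc |X ω| ^ 2 ≤ 2 * exp |X ω| := sq_le_two_mul_exp (abs_nonneg _)
      _ ≤ 2 * exp (2 * |X ω|) := by gcongr; linarith [abs_nonneg (X ω)])

lemma log_integral_exp_mul_le [IsProbabilityMeasure P] (hX : Measurable X)
    (hint : Integrable (fun ω => exp (2 * |X ω|)) P) (hcent : ∫ ω, X ω ∂P = 0) {M : ℝ}
    (hM : ∫ ω, exp (2 * |X ω|) ∂P ≤ M) {l : ℝ} (hl : |l| ≤ 1) :
    log (∫ ω, exp (l * X ω) ∂P) ≤ 2 * M * l ^ 2 := by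
  have hexp := integrable_exp_mul_of_integrable_exp_two_mul_abs hX hint (hl.trans one_le_two)
  have hlin : Integrable (fun ω => 1 + l * X ω) P :=
    (integrable_const 1).add ((integrable_of_integrable_exp_two_mul_abs hX hint).const_mul l)
  have hquad : Integrable (fun ω => 2 * l ^ 2 * exp (2 * |X ω|)) P := hint.const_mul _
  calc log (∫ ω, exp (l * X ω) ∂P) ≤ ∫ ω, exp (l * X ω) ∂P - 1 :=
        log_le_sub_one_of_pos (integral_exp_pos hexp)
    _ ≤ ∫ ω, (1 + l * X ω + 2 * l ^ 2 * exp (2 * |X ω|)) ∂P - 1 :=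
        sub_le_sub_right (integral_mono hexp (hlin.add hquad)
          fun ω => exp_mul_le_one_add_add_two_mul_sq_mul_exp hl (X ω)) 1
    _ = 2 * l ^ 2 * ∫ ω, exp (2 * |X ω|) ∂P := by
        rw [integral_add hlin hquad, integral_add (integrable_const 1)
          ((integrable_of_integrable_exp_two_mul_abs hX hint).const_mul l), integral_const_mul,
          integral_const_mul, hcent]
        simp
    _ ≤ 2 * M * l ^ 2 := by nlinarith [sq_nonneg l]

lemma two_add_sq_mul_variance_le_integral_exp_add_integral_exp_neg [IsProbabilityMeasure P]
    (hX : Measurable X) (hint : Integrable (fun ω => exp (2 * |X ω|)) P) {l : ℝ}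
    (hl : |l| ≤ 1) :
    2 + l ^ 2 * variance X P ≤ ∫ ω, exp (l * X ω) ∂P + ∫ ω, exp (-l * X ω) ∂P := by
  have hpos := integrable_exp_mul_of_integrable_exp_two_mul_abs hX hint (hl.trans one_le_two)
  have hneg := integrable_exp_mul_of_integrable_exp_two_mul_abs hX hint
    ((abs_neg l).trans_le (hl.trans one_le_two))
  have hsq := (integrable_sq_of_integrable_exp_two_mul_abs hX hint).const_mul (l ^ 2)
  calc 2 + l ^ 2 * variance X P ≤ 2 + l ^ 2 * ∫ ω, X ω ^ 2 ∂P := by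
        gcongr; exact variance_le_expectation_sq hX.aestronglyMeasurable
    _ = ∫ ω, (2 + l ^ 2 * X ω ^ 2) ∂P := by
        rw [integral_add (integrable_const 2) hsq, integral_const_mul]; simp
    _ ≤ ∫ ω, (exp (l * X ω) + exp (-l * X ω)) ∂P :=
        integral_mono ((integrable_const 2).add hsq) (hpos.add hneg) fun ω => by
          simpa [neg_mul, mul_pow] using two_add_sq_le_exp_add_exp_neg (l * X ω)
    _ = ∫ ω, exp (l * X ω) ∂P + ∫ ω, exp (-l * X ω) ∂P := integral_add hpos hneg

end

theorem phi_quadratic_near_zero_general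
    {T : Type*}
    {Ω : Type*} [MeasurableSpace Ω] (P : Measure Ω) [IsProbabilityMeasure P]
    (ξ : T → Ω → ℝ) (hmeas : ∀ t, Measurable (ξ t))
    (hCramer : StrengthenedCramer P ξ)
    (hcent : ∀ t : T, ∫ ω, ξ t ω ∂P = 0)
    (hnondeg : 0 < ⨆ t : T, variance (ξ t) P) :
    ∃ C₁ C₂ : ℝ, 0 < C₁ ∧ C₁ ≤ C₂ ∧
      ∀ l : ℝ, |l| ≤ 1 →
        C₁ * l ^ 2 ≤ phiFun P ξ l ∧ phiFun P ξ l ≤ C₂ * l ^ 2 := by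
  obtain ⟨M, hM⟩ := hCramer.exists_forall_integral_exp_two_mul_abs_le hmeas
  obtain ⟨t₀, hv⟩ : ∃ t₀, 0 < variance (ξ t₀) P := by
    by_contra! h
    exact hnondeg.not_ge (Real.iSup_nonpos h)
  have : Nonempty T := ⟨t₀⟩
  set v := variance (ξ t₀) P
  have hpoint : ∀ l, |l| ≤ 1 → ∀ t, max (log (∫ ω, exp (l * ξ t ω) ∂P))
      (log (∫ ω, exp (-l * ξ t ω) ∂P)) ≤ 2 * M * l ^ 2 := fun l hl t =>
    max_le (log_integral_exp_mul_le (hmeas t) (hM t).1 (hcent t) (hM t).2 hl)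
      (neg_sq l ▸ log_integral_exp_mul_le (hmeas t) (hM t).1 (hcent t) (hM t).2
        ((abs_neg l).trans_le hl))
  have hupper : ∀ l, |l| ≤ 1 → phiFun P ξ l ≤ 2 * M * l ^ 2 := fun l hl =>
    ciSup_le (hpoint l hl)
  have hlower : ∀ l, |l| ≤ 1 → v / (v / 2 + 2) * l ^ 2 ≤ phiFun P ξ l := by
    intro l hl
    have hsum := two_add_sq_mul_variance_le_integral_exp_add_integral_exp_neg (hmeas t₀)
      (hM t₀).1 hl
    calc v / (v / 2 + 2) * l ^ 2 = 2 * (v / 2) / (v / 2 + 2) * l ^ 2 := by ring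
      _ ≤ log (1 + v / 2 * l ^ 2) :=
        mul_sq_le_log_one_add_mul_sq (by positivity) (sq_le_one_iff_abs_le_one l |>.2 hl)
      _ ≤ _ := log_le_max_log_of_le_max (by positivity) (by
        rw [le_max_iff]; by_contra! h; linarith)
      _ ≤ phiFun P ξ l := le_ciSup ⟨_, forall_mem_range.2 (hpoint l hl)⟩ t₀
  refine ⟨v / (v / 2 + 2), 2 * M, by positivity, ?_, fun l hl => ⟨hlower l hl, hupper l hl⟩⟩
  simpa using (hlower 1 (by simp)).trans (hupper 1 (by simp))

/-- If the centered process `ξ` satisfies the strengthened Cramér condition and is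
nondegenerate (`sup_t Var ξ(t) > 0`), then there are constants `0 < C₁ ≤ C₂ < ∞`
such that `C₁ λ² ≤ φ(λ) ≤ C₂ λ²` for all `|λ| ≤ 1`. -/
theorem phi_quadratic_near_zero
    {T : Type*} [MetricSpace T] [CompactSpace T] [Nonempty T]
    {Ω : Type*} [MeasurableSpace Ω] (P : Measure Ω) [IsProbabilityMeasure P]
    (ξ : T → Ω → ℝ) (hmeas : ∀ t, Measurable (ξ t))
    (hCramer : StrengthenedCramer P ξ)
    (hcent : ∀ t : T, ∫ ω, ξ t ω ∂P = 0)
    (hnondeg : 0 < ⨆ t : T, variance (ξ t) P) :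
    ∃ C₁ C₂ : ℝ, 0 < C₁ ∧ C₁ ≤ C₂ ∧
      ∀ l : ℝ, |l| ≤ 1 →
        C₁ * l ^ 2 ≤ phiFun P ξ l ∧ phiFun P ξ l ≤ C₂ * l ^ 2 :=
  phi_quadratic_near_zero_general P ξ hmeas hCramer hcent hnondeg
end

section
/- Let φ : ℝ → [0, ∞) be finite on all of ℝ, even, convex, with φ(0) = 0, and suppose there exists C₂ < ∞ such that φ(λ) ≤ C₂ λ² for all |λ| ≤ 1. Define χ(λ) := sup_{n≥1} n · φ(λ/√n). Then χ(λ) < ∞ for every λ ∈ ℝ; χ is even and convex with χ(0) = 0 and χ ≥ φ; and for every integer n ≥ 1 and every λ ∈ ℝ one has n · χ(λ/√n) ≤ χ(λ). -/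
open Real Set

/-- `χ(λ) = sup_{n ≥ 1} n · φ(λ/√n)`. -/
noncomputable def chiOf (φ : ℝ → ℝ) (l : ℝ) : ℝ :=
  ⨆ n : ℕ+, (n : ℝ) * φ (l / Real.sqrt (n : ℝ))

section aux

variable {φ : ℝ → ℝ}

lemma phi_mono (hφeven : ∀ l : ℝ, φ (-l) = φ l)
    (hφconv : ConvexOn ℝ Set.univ φ) {a b : ℝ} (ha : 0 ≤ a) (hab : a ≤ b) :
    φ a ≤ φ b := by
  rcases eq_or_lt_of_le (ha.trans hab) with hb | hb
  · have : a = b := le_antisymm hab (hb ▸ ha)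
    rw [this]
  · have hseg : a ∈ segment ℝ (-b) b := by
      rw [segment_eq_Icc (by linarith)]
      constructor <;> [linarith; linarith]
    have := hφconv.le_on_segment (Set.mem_univ (-b)) (Set.mem_univ b) hseg
    rwa [hφeven b, max_self] at this

end aux

/-- If `φ : ℝ → [0,∞)` is even, convex, vanishes at `0` and satisfies
`φ(λ) ≤ C₂ λ²` for `|λ| ≤ 1`, then `χ(λ) := sup_{n ≥ 1} n φ(λ/√n)` is finite for
every `λ` (the supremum is bounded), is nonnegative, even and convex with
`χ(0) = 0`, `χ ≥ φ`, and `n · χ(λ/√n) ≤ χ(λ)` for every `n ≥ 1` and `λ ∈ ℝ`. -/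
theorem chi_properties (φ : ℝ → ℝ)
    (hφnonneg : ∀ l : ℝ, 0 ≤ φ l)
    (hφeven : ∀ l : ℝ, φ (-l) = φ l)
    (hφconv : ConvexOn ℝ Set.univ φ)
    (hφ0 : φ 0 = 0)
    (C₂ : ℝ) (hC₂ : ∀ l : ℝ, |l| ≤ 1 → φ l ≤ C₂ * l ^ 2) :
    (∀ l : ℝ, BddAbove (Set.range fun n : ℕ+ => (n : ℝ) * φ (l / Real.sqrt (n : ℝ)))) ∧
    (∀ l : ℝ, 0 ≤ chiOf φ l) ∧
    (∀ l : ℝ, chiOf φ (-l) = chiOf φ l) ∧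
    ConvexOn ℝ Set.univ (chiOf φ) ∧
    chiOf φ 0 = 0 ∧
    (∀ l : ℝ, φ l ≤ chiOf φ l) ∧
    (∀ n : ℕ, 1 ≤ n → ∀ l : ℝ,
      (n : ℝ) * chiOf φ (l / Real.sqrt (n : ℝ)) ≤ chiOf φ l) := by
  have hC₂0 : 0 ≤ C₂ := by
    have := hC₂ 1 (by norm_num)
    have := hφnonneg 1
    nlinarith
  have hsq : ∀ n : ℕ+, Real.sqrt (n : ℝ) * Real.sqrt (n : ℝ) = (n : ℝ) := fun n =>
    Real.mul_self_sqrt (by positivity)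
  have hsqpos : ∀ n : ℕ+, 0 < Real.sqrt (n : ℝ) := fun n =>
    Real.sqrt_pos.2 (by exact_mod_cast n.pos)
  have hsq1 : ∀ n : ℕ+, 1 ≤ Real.sqrt (n : ℝ) := fun n =>
    Real.one_le_sqrt.2 (by exact_mod_cast n.one_le)
  -- boundedness
  have hbdd : ∀ l : ℝ, BddAbove
      (Set.range fun n : ℕ+ => (n : ℝ) * φ (l / Real.sqrt (n : ℝ))) := by
    intro l
    refine ⟨C₂ * l ^ 2 + l ^ 2 * φ l, ?_⟩
    rintro x ⟨n, rfl⟩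
    have hn1 : (1 : ℝ) ≤ (n : ℝ) := by exact_mod_cast n.one_le
    have habs : |l / Real.sqrt (n : ℝ)| ≤ |l| := by
      rw [abs_div, abs_of_pos (hsqpos n)]
      exact div_le_self (abs_nonneg l) (hsq1 n)
    have hφl : φ l = φ |l| := by
      rcases abs_choice l with h | h
      · rw [h]
      · rw [h, hφeven]
    rcases le_or_gt ((n : ℝ)) (l ^ 2) with hn | hn
    · -- small n: use monotonicity
      have h1 : φ (l / Real.sqrt (n : ℝ)) ≤ φ l := by
        have : φ (l / Real.sqrt (n : ℝ)) = φ |l / Real.sqrt (n : ℝ)| := by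
          rcases abs_choice (l / Real.sqrt (n : ℝ)) with h | h
          · rw [h]
          · rw [h, hφeven]
        rw [this, hφl]
        exact phi_mono hφeven hφconv (abs_nonneg _) habs
      have h2 : (n : ℝ) * φ (l / Real.sqrt (n : ℝ)) ≤ l ^ 2 * φ l := by
        calc (n : ℝ) * φ (l / Real.sqrt (n : ℝ)) ≤ (n : ℝ) * φ l :=
              mul_le_mul_of_nonneg_left h1 (by linarith)
          _ ≤ l ^ 2 * φ l := mul_le_mul_of_nonneg_right hn (hφnonneg l)
      nlinarith [hφnonneg l]
    · -- large n: use the quadratic bound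
      have habs1 : |l / Real.sqrt (n : ℝ)| ≤ 1 := by
        rw [abs_div, abs_of_pos (hsqpos n), div_le_one (hsqpos n)]
        have : |l| * |l| ≤ (n : ℝ) := by
          rw [← abs_mul, abs_mul_self]; nlinarith
        nlinarith [hsqpos n, hsq n, abs_nonneg l]
      have h1 := hC₂ _ habs1
      have h2 : (l / Real.sqrt (n : ℝ)) ^ 2 = l ^ 2 / (n : ℝ) := by
        rw [div_pow, Real.sq_sqrt (by positivity : (0:ℝ) ≤ ((n:ℕ):ℝ))]
      rw [h2] at h1
      have h3 : (n : ℝ) * φ (l / Real.sqrt (n : ℝ)) ≤ C₂ * l ^ 2 := by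
        have := mul_le_mul_of_nonneg_left h1 (le_trans zero_le_one hn1)
        calc (n : ℝ) * φ (l / Real.sqrt (n : ℝ)) ≤ (n : ℝ) * (C₂ * (l ^ 2 / (n : ℝ))) := this
          _ = C₂ * l ^ 2 := by field_simp
      nlinarith [hφnonneg l, sq_nonneg l]
  have hterm_le : ∀ (l : ℝ) (n : ℕ+),
      (n : ℝ) * φ (l / Real.sqrt (n : ℝ)) ≤ chiOf φ l := fun l n =>
    le_ciSup (hbdd l) n
  have hphi_le : ∀ l : ℝ, φ l ≤ chiOf φ l := by
    intro l
    have := hterm_le l 1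
    simpa using this
  have hnonneg : ∀ l : ℝ, 0 ≤ chiOf φ l := fun l => (hφnonneg l).trans (hphi_le l)
  have heven : ∀ l : ℝ, chiOf φ (-l) = chiOf φ l := by
    intro l
    unfold chiOf
    congr 1
    funext n
    rw [neg_div, hφeven]
  have hconv : ConvexOn ℝ Set.univ (chiOf φ) := by
    refine ⟨convex_univ, fun x _ y _ a b ha hb hab => ?_⟩
    refine ciSup_le fun n => ?_
    have key : (n : ℝ) * φ ((a • x + b • y) / Real.sqrt (n : ℝ)) ≤
        a * ((n : ℝ) * φ (x / Real.sqrt (n : ℝ))) +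
        b * ((n : ℝ) * φ (y / Real.sqrt (n : ℝ))) := by
      have harg : (a • x + b • y) / Real.sqrt (n : ℝ) =
          a • (x / Real.sqrt (n : ℝ)) + b • (y / Real.sqrt (n : ℝ)) := by
        simp only [smul_eq_mul]
        field_simp
      rw [harg]
      have := hφconv.2 (Set.mem_univ (x / Real.sqrt (n : ℝ)))
        (Set.mem_univ (y / Real.sqrt (n : ℝ))) ha hb hab
      have hn0 : (0 : ℝ) ≤ (n : ℝ) := by positivity
      calc (n : ℝ) * φ (a • (x / Real.sqrt (n : ℝ)) + b • (y / Real.sqrt (n : ℝ)))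
          ≤ (n : ℝ) * (a • φ (x / Real.sqrt (n : ℝ)) + b • φ (y / Real.sqrt (n : ℝ))) :=
            mul_le_mul_of_nonneg_left this hn0
        _ = a * ((n : ℝ) * φ (x / Real.sqrt (n : ℝ))) +
            b * ((n : ℝ) * φ (y / Real.sqrt (n : ℝ))) := by
            simp only [smul_eq_mul]; ring
    refine key.trans ?_
    have h1 : a * ((n : ℝ) * φ (x / Real.sqrt (n : ℝ))) ≤ a * chiOf φ x :=
      mul_le_mul_of_nonneg_left (hterm_le x n) ha
    have h2 : b * ((n : ℝ) * φ (y / Real.sqrt (n : ℝ))) ≤ b * chiOf φ y :=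
      mul_le_mul_of_nonneg_left (hterm_le y n) hb
    have := add_le_add h1 h2
    simpa [smul_eq_mul] using this
  have hzero : chiOf φ 0 = 0 := by
    unfold chiOf
    have : ∀ n : ℕ+, (n : ℝ) * φ (0 / Real.sqrt (n : ℝ)) = 0 := by
      intro n; rw [zero_div, hφ0, mul_zero]
    simp only [this]
    exact ciSup_const
  refine ⟨hbdd, hnonneg, heven, hconv, hzero, hphi_le, ?_⟩
  intro n hn l
  have hnpos : (0 : ℝ) ≤ (n : ℝ) := Nat.cast_nonneg n
  set N : ℕ+ := ⟨n, hn⟩ with hN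
  have hNc : ((N : ℕ) : ℝ) = (n : ℝ) := rfl
  rw [show ((n : ℕ) : ℝ) = ((N : ℕ) : ℝ) from rfl]
  unfold chiOf
  rw [Real.mul_iSup_of_nonneg (show (0:ℝ) ≤ ((N:ℕ):ℝ) by positivity)]
  refine ciSup_le fun m => ?_
  have hkey : ((N : ℕ) : ℝ) * ((m : ℝ) * φ (l / Real.sqrt ((N : ℕ) : ℝ) / Real.sqrt (m : ℝ)))
      = ((N * m : ℕ+) : ℝ) * φ (l / Real.sqrt ((N * m : ℕ+) : ℝ)) := by
    have hc : ((N * m : ℕ+) : ℝ) = ((N : ℕ) : ℝ) * (m : ℝ) := by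
      push_cast; ring
    rw [hc, Real.sqrt_mul (by positivity), div_div, mul_assoc]
  rw [hkey]
  exact hterm_le l (N * m)
end
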